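/- Suppose F : D → ℂ is holomorphic on open D ⊆ ℂ and Φ(ζ) = (1/(2πi))∮_γ F(t)(t − ζ)⁻¹ dt for ζ = x₁e₁ + ⋯ + x_k e_k ∈ Π = {ζ ∈ E_k : f(ζ) ∈ D}, γ a contour in D around f(ζ). Then Φ(ζ) = F(f(ζ)) + (b₁x₁+⋯+b_k x_k)F′(f(ζ))ρ + ((c₁x₁+⋯+c_k x_k)F′(f(ζ)) + (b₁x₁+⋯+b_k x_k)²F″(f(ζ))/2)ρ². -/

import Mathlib

noncomputable section

/-- The commutative algebra `A₃ = ℂ[ρ]/(ρ³)`, with basis `{1, ρ, ρ²}`;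
an element `⟨a, b, c⟩` represents `a + b·ρ + c·ρ²`. -/
@[ext] structure A3 : Type where
  a : ℂ
  b : ℂ
  c : ℂ

namespace A3

instance : Zero A3 := ⟨⟨0, 0, 0⟩⟩
instance : One A3 := ⟨⟨1, 0, 0⟩⟩
instance : Add A3 := ⟨fun x y => ⟨x.a + y.a, x.b + y.b, x.c + y.c⟩⟩
instance : Neg A3 := ⟨fun x => ⟨-x.a, -x.b, -x.c⟩⟩
instance : Mul A3 :=
  ⟨fun x y => ⟨x.a * y.a, x.a * y.b + x.b * y.a, x.a * y.c + x.b * y.b + x.c * y.a⟩⟩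

@[simp] lemma zero_a : (0 : A3).a = 0 := rfl
@[simp] lemma zero_b : (0 : A3).b = 0 := rfl
@[simp] lemma zero_c : (0 : A3).c = 0 := rfl
@[simp] lemma one_a : (1 : A3).a = 1 := rfl
@[simp] lemma one_b : (1 : A3).b = 0 := rfl
@[simp] lemma one_c : (1 : A3).c = 0 := rfl
@[simp] lemma add_a (x y : A3) : (x + y).a = x.a + y.a := rfl
@[simp] lemma add_b (x y : A3) : (x + y).b = x.b + y.b := rfl
@[simp] lemma add_c (x y : A3) : (x + y).c = x.c + y.c := rfl
@[simp] lemma neg_a (x : A3) : (-x).a = -x.a := rfl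
@[simp] lemma neg_b (x : A3) : (-x).b = -x.b := rfl
@[simp] lemma neg_c (x : A3) : (-x).c = -x.c := rfl
@[simp] lemma mul_a (x y : A3) : (x * y).a = x.a * y.a := rfl
@[simp] lemma mul_b (x y : A3) : (x * y).b = x.a * y.b + x.b * y.a := rfl
@[simp] lemma mul_c (x y : A3) : (x * y).c = x.a * y.c + x.b * y.b + x.c * y.a := rfl

instance : CommRing A3 where
  add_assoc x y z := by ext <;> simp <;> ring
  zero_add x := by ext <;> simp
  add_zero x := by ext <;> simp
  add_comm x y := by ext <;> simp <;> ring
  neg_add_cancel x := by ext <;> simp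
  left_distrib x y z := by ext <;> simp <;> ring
  right_distrib x y z := by ext <;> simp <;> ring
  zero_mul x := by ext <;> simp
  mul_zero x := by ext <;> simp
  mul_assoc x y z := by ext <;> simp <;> ring
  one_mul x := by ext <;> simp
  mul_one x := by ext <;> simp
  mul_comm x y := by ext <;> simp <;> ring
  nsmul := fun n x => ⟨n • x.a, n • x.b, n • x.c⟩
  nsmul_zero x := A3.ext (zero_nsmul x.a) (zero_nsmul x.b) (zero_nsmul x.c)
  nsmul_succ n x := A3.ext (succ_nsmul x.a n) (succ_nsmul x.b n) (succ_nsmul x.c n)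
  zsmul := fun n x => ⟨n • x.a, n • x.b, n • x.c⟩
  zsmul_zero' x := A3.ext (SubNegMonoid.zsmul_zero' x.a) (SubNegMonoid.zsmul_zero' x.b) (SubNegMonoid.zsmul_zero' x.c)
  zsmul_succ' n x := A3.ext (SubNegMonoid.zsmul_succ' n x.a) (SubNegMonoid.zsmul_succ' n x.b) (SubNegMonoid.zsmul_succ' n x.c)
  zsmul_neg' n x := A3.ext (SubNegMonoid.zsmul_neg' n x.a) (SubNegMonoid.zsmul_neg' n x.b) (SubNegMonoid.zsmul_neg' n x.c)

/-- The canonical embedding `ℂ → A₃`. -/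
def toA3 : ℂ →+* A3 where
  toFun r := ⟨r, 0, 0⟩
  map_one' := rfl
  map_mul' x y := by ext <;> simp
  map_zero' := rfl
  map_add' x y := by ext <;> simp

instance : Algebra ℂ A3 := toA3.toAlgebra
instance : Algebra ℝ A3 := (toA3.comp (algebraMap ℝ ℂ)).toAlgebra

@[simp] lemma smulC_a (r : ℂ) (x : A3) : (r • x).a = r * x.a := by
  show (toA3 r * x).a = _ ; simp [toA3]
@[simp] lemma smulC_b (r : ℂ) (x : A3) : (r • x).b = r * x.b := by
  show (toA3 r * x).b = _ ; simp [toA3]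
@[simp] lemma smulC_c (r : ℂ) (x : A3) : (r • x).c = r * x.c := by
  show (toA3 r * x).c = _ ; simp [toA3]
@[simp] lemma smulR_a (r : ℝ) (x : A3) : (r • x).a = (r : ℂ) * x.a := by
  show ((toA3.comp (algebraMap ℝ ℂ)) r * x).a = _ ; simp [toA3]
@[simp] lemma smulR_b (r : ℝ) (x : A3) : (r • x).b = (r : ℂ) * x.b := by
  show ((toA3.comp (algebraMap ℝ ℂ)) r * x).b = _ ; simp [toA3]
@[simp] lemma smulR_c (r : ℝ) (x : A3) : (r • x).c = (r : ℂ) * x.c := by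
  show ((toA3.comp (algebraMap ℝ ℂ)) r * x).c = _ ; simp [toA3]

/-- The nilpotent generator `ρ`. -/
def ρ : A3 := ⟨0, 1, 0⟩

lemma rho_sq : ρ ^ 2 = ⟨0, 0, 1⟩ := by ext <;> simp [ρ, sq]
lemma rho_cubed : ρ ^ 3 = 0 := by ext <;> simp [ρ, pow_succ, sq]

/-- The element `a + b·ρ + c·ρ²` of `A₃`. -/
def el (a b c : ℂ) : A3 := algebraMap ℂ A3 a + b • ρ + c • ρ ^ 2

lemma el_def (a b c : ℂ) : el a b c = ⟨a, b, c⟩ := by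
  simp only [el, rho_sq]; ext <;> simp [ρ] <;> simp [Algebra.algebraMap_eq_smul_one, toA3]

/-- The Euclidean norm `‖a + bρ + cρ²‖ = √(|a|² + |b|² + |c|²)`. -/
def nrm (x : A3) : ℝ :=
  Real.sqrt (‖x.a‖ ^ 2 + ‖x.b‖ ^ 2 + ‖x.c‖ ^ 2)

/-- The topology of `A₃` (that of the Euclidean norm, i.e. of `ℂ³`). -/
instance : TopologicalSpace A3 :=
  TopologicalSpace.induced (fun x => (x.a, x.b, x.c)) inferInstance

/-- The functional `f(a + bρ + cρ²) = a`. -/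
def fl (x : A3) : ℂ := x.a

/-- The set `I = {λ₁ρ + λ₂ρ² : λ₁, λ₂ ∈ ℂ}`. -/
def Iset : Set A3 := {x | ∃ l₁ l₂ : ℂ, x = l₁ • ρ + l₂ • ρ ^ 2}

/-- The kernel of `f`, i.e. the ideal `I`, as a real subspace of `A₃`. -/
def Iker : Submodule ℝ A3 where
  carrier := {x | x.a = 0}
  add_mem' := by intro x y hx hy; simp_all [Set.mem_setOf_eq]
  zero_mem' := rfl
  smul_mem' := by intro r x hx; simp_all [Set.mem_setOf_eq]

/-- Componentwise contour integral over the circle `C(center, r)` of an `A₃`-valued function. -/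
def cInt (g : ℂ → A3) (center : ℂ) (r : ℝ) : A3 :=
  ⟨∮ z in C(center, r), (g z).a, ∮ z in C(center, r), (g z).b, ∮ z in C(center, r), (g z).c⟩

end A3

/-!
Since `ρ³ = 0`, for `ζ = α + βρ + γρ²` and `t ≠ α` the resolvent is
`(t - ζ)⁻¹ = (t - α)⁻¹ + β (t - α)⁻² ρ + (γ (t - α)⁻² + β² (t - α)⁻³) ρ²`.
Hence every component of `F(t)(t - ζ)⁻¹` is a combination of the Cauchy kernels
`F(t) / (t - α)ⁿ⁺¹`, `n ≤ 2`, and the Cauchy formula for derivatives evaluates the contour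
integral as a combination of `F(α)`, `F'(α)` and `F''(α)/2`, with `α = f(ζ)`.
-/

open Complex Metric

namespace A3

lemma sum_smul_el {ι : Type*} (s : Finset ι) (x : ι → ℝ) (a b c : ι → ℂ) :
    ∑ j ∈ s, x j • el (a j) (b j) (c j) =
      el (∑ j ∈ s, (x j : ℂ) * a j) (∑ j ∈ s, (x j : ℂ) * b j) (∑ j ∈ s, (x j : ℂ) * c j) := by
  induction s using Finset.cons_induction with
  | empty => ext <;> simp [el_def]
  | cons j s hj ih => rw [Finset.sum_cons, ih]; ext <;> simp [el_def]

lemma inverse_toA3_sub {t : ℂ} {ζ : A3} (ht : t ≠ ζ.a) :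
    Ring.inverse (toA3 t - ζ) =
      ⟨(t - ζ.a)⁻¹, ζ.b * (t - ζ.a)⁻¹ ^ 2, ζ.c * (t - ζ.a)⁻¹ ^ 2 + ζ.b ^ 2 * (t - ζ.a)⁻¹ ^ 3⟩ := by
  have hsub : toA3 t - ζ = ⟨t - ζ.a, -ζ.b, -ζ.c⟩ := by ext <;> simp [sub_eq_add_neg, toA3]
  have hd : t - ζ.a ≠ 0 := sub_ne_zero.mpr ht
  rw [hsub]
  generalize t - ζ.a = d at hd ⊢
  have h : (⟨d, -ζ.b, -ζ.c⟩ : A3) *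
      ⟨d⁻¹, ζ.b * d⁻¹ ^ 2, ζ.c * d⁻¹ ^ 2 + ζ.b ^ 2 * d⁻¹ ^ 3⟩ = 1 := by
    ext <;> simp <;> field_simp <;> ring
  exact Ring.inverse_unit (Units.mkOfMulEqOne _ _ h)

theorem two_pi_I_inv_smul_cInt_smul_inverse {F : ℂ → ℂ} {ζ : A3} {r : ℝ} (hr : 0 < r)
    (hF : DifferentiableOn ℂ F (closedBall ζ.a r)) :
    (2 * Real.pi * I : ℂ)⁻¹ • cInt (fun t => F t • Ring.inverse (toA3 t - ζ)) ζ.a r =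
      el (F ζ.a) (ζ.b * deriv F ζ.a)
        (ζ.c * deriv F ζ.a + ζ.b ^ 2 / 2 * deriv (deriv F) ζ.a) := by
  set c := ζ.a
  set g : ℕ → ℂ → ℂ := fun n z => (1 / (z - c) ^ (n + 1)) • F z with hg
  have hne : ∀ z ∈ sphere c r, z - c ≠ 0 := fun z hz => sub_ne_zero.2 (ne_of_mem_sphere hz hr.ne')
  have cauchy (n : ℕ) :
      (2 * Real.pi * I)⁻¹ * ∮ z in C(c, r), g n z = iteratedDeriv n F c / n.factorial := by
    rw [hF.circleIntegral_one_div_sub_center_pow_smul hr n, smul_eq_mul]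
    field_simp [two_pi_I_ne_zero]
  have integrable (n : ℕ) : CircleIntegrable (g n) c r :=
    ((continuousOn_const.div ((continuousOn_id.sub continuousOn_const).pow _)
      fun z hz => pow_ne_zero _ (hne z hz)).smul
        (hF.continuousOn.mono sphere_subset_closedBall)).circleIntegrable hr.le
  have integrand : Set.EqOn (fun t => F t • Ring.inverse (toA3 t - ζ))
      (fun z => ⟨g 0 z, ζ.b * g 1 z, ζ.c * g 1 z + ζ.b ^ 2 * g 2 z⟩) (sphere c r) := by
    intro z hz
    dsimp only
    rw [inverse_toA3_sub (sub_ne_zero.1 (hne z hz))]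
    ext <;> simp [hg] <;> ring
  have components : cInt (fun t => F t • Ring.inverse (toA3 t - ζ)) c r =
      ⟨∮ z in C(c, r), g 0 z, ζ.b * ∮ z in C(c, r), g 1 z,
        ζ.c * (∮ z in C(c, r), g 1 z) + ζ.b ^ 2 * ∮ z in C(c, r), g 2 z⟩ := by
    simp only [cInt, circleIntegral.integral_congr hr.le fun z hz => congrArg A3.a (integrand hz),
      circleIntegral.integral_congr hr.le fun z hz => congrArg A3.b (integrand hz),
      circleIntegral.integral_congr hr.le fun z hz => congrArg A3.c (integrand hz)]
    rw [circleIntegral.integral_add (f := fun z => ζ.c * g 1 z) (g := fun z => ζ.b ^ 2 * g 2 z)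
      (integrable 1).const_fun_smul (integrable 2).const_fun_smul]
    simp only [circleIntegral.integral_const_mul]
  have h0 := cauchy 0
  have h1 := cauchy 1
  have h2 := cauchy 2
  rw [iteratedDeriv_zero, Nat.factorial_zero, Nat.cast_one, div_one] at h0
  rw [iteratedDeriv_one, Nat.factorial_one, Nat.cast_one, div_one] at h1
  rw [iteratedDeriv_succ, iteratedDeriv_one, Nat.factorial_two, Nat.cast_two] at h2
  rw [components, el_def]
  ext <;> simp only [smulC_a, smulC_b, smulC_c]
  · exact h0
  · linear_combination ζ.b * h1
  · linear_combination ζ.c * h1 + ζ.b ^ 2 * h2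

end A3

theorem stmt16_general (k : ℕ) (av bv cv : Fin k → ℂ) (e : Fin k → A3)
    (he : ∀ j, e j = A3.el (av j) (bv j) (cv j))
    (D : Set ℂ) (F : ℂ → ℂ) (hF : DifferentiableOn ℂ F D)
    (x : Fin k → ℝ) (ζ : A3) (hζ : ζ = ∑ j, x j • e j)
    (r : ℝ) (hr : 0 < r) (hball : Metric.closedBall (A3.fl ζ) r ⊆ D) :
    (2 * Real.pi * Complex.I : ℂ)⁻¹ •
      A3.cInt (fun t => F t • Ring.inverse (A3.toA3 t - ζ)) (A3.fl ζ) r =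
    A3.el (F (A3.fl ζ))
      ((∑ j, (x j : ℂ) * bv j) * deriv F (A3.fl ζ))
      ((∑ j, (x j : ℂ) * cv j) * deriv F (A3.fl ζ) +
        (∑ j, (x j : ℂ) * bv j) ^ 2 / 2 * deriv (deriv F) (A3.fl ζ)) := by
  have hζ_el : ζ = A3.el (∑ j, (x j : ℂ) * av j) (∑ j, (x j : ℂ) * bv j)
      (∑ j, (x j : ℂ) * cv j) := by
    simp only [hζ, he, A3.sum_smul_el]
  have hb : ζ.b = ∑ j, (x j : ℂ) * bv j := by rw [hζ_el, A3.el_def]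
  have hc : ζ.c = ∑ j, (x j : ℂ) * cv j := by rw [hζ_el, A3.el_def]
  rw [← hb, ← hc]
  exact A3.two_pi_I_inv_smul_cInt_smul_inverse hr (hF.mono hball)

/-- expansion of the main extension `(1/2πi)∮ F(t)(t − ζ)⁻¹ dt` in the
basis `{1, ρ, ρ²}` for `ζ = Σ x_j e_j`. -/
theorem stmt16 (k : ℕ) (av bv cv : Fin k → ℂ) (e : Fin k → A3)
    (he : ∀ j, e j = A3.el (av j) (bv j) (cv j))
    (D : Set ℂ) (hD : IsOpen D) (F : ℂ → ℂ) (hF : DifferentiableOn ℂ F D)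
    (x : Fin k → ℝ) (ζ : A3) (hζ : ζ = ∑ j, x j • e j)
    (r : ℝ) (hr : 0 < r) (hball : Metric.closedBall (A3.fl ζ) r ⊆ D) :
    (2 * Real.pi * Complex.I : ℂ)⁻¹ •
      A3.cInt (fun t => F t • Ring.inverse (A3.toA3 t - ζ)) (A3.fl ζ) r =
    A3.el (F (A3.fl ζ))
      ((∑ j, (x j : ℂ) * bv j) * deriv F (A3.fl ζ))
      ((∑ j, (x j : ℂ) * cv j) * deriv F (A3.fl ζ) +
        (∑ j, (x j : ℂ) * bv j) ^ 2 / 2 * deriv (deriv F) (A3.fl ζ)) :=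
  stmt16_general k av bv cv e he D F hF x ζ hζ r hr hball
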